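/- Let n, m be positive integers and let H : ℕ × ℕ → ℕ be defined by H(i,j) = C(i-1+n, n-1) · C(j-1+m, m-1). Then H is a fractal function, and for each (i,j) the only Ferrers matrix of size (C(i-1+n,n-1), C(j-1+m,m-1)) satisfying the defining conditions is the all-ones matrix. -/

import Mathlib

/-! ### Fractal functions (combinatorial side) -/

/-- The expansion `[σ]` of a finite sequence of positive integers:
`[σ] = [s_1] ⌢ … ⌢ [s_k]` where `[a] = (1,…,a)`; `[n]^d = expand^[d] [n]`. -/
def expand (σ : List ℕ) : List ℕ := (σ.map fun a => List.range' 1 a).flatten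

/-- A matrix with `{0,1}` entries is encoded as a list of rows of Booleans;
`ent M r c` is the entry at (0-based) position `(r,c)` (`false` outside the matrix). -/
def ent (M : List (List Bool)) (r c : ℕ) : Bool := (M.getD r []).getD c false

/-- A Ferrers matrix: if the entry at `(r,c)` is `1` then so is the entry at every
position `(r',c') ≤ (r,c)`. -/
def IsFerrers (M : List (List Bool)) : Prop :=
  ∀ r c r' c' : ℕ, r' ≤ r → c' ≤ c → ent M r c = true → ent M r' c' = true

/-- `M` has `a` rows and `b` columns. -/
def sizeIs (M : List (List Bool)) (a b : ℕ) : Prop :=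
  M.length = a ∧ ∀ row ∈ M, row.length = b

/-- The sum of the entries of `M` (number of `1` entries). -/
def matSum (M : List (List Bool)) : ℕ := (M.map fun row => row.count true).sum

/-- The row expansion `M^{⟨v,•⟩}`: the `i`-th row of `M` is repeated `v_i` times. -/
def rowExp (M : List (List Bool)) (v : List ℕ) : List (List Bool) :=
  (List.zipWith (fun vi row => List.replicate vi row) v M).flatten

/-- The column expansion `M^{⟨•,w⟩}`: the `j`-th column of `M` is repeated `w_j`
times. -/
def colExp (M : List (List Bool)) (w : List ℕ) : List (List Bool) :=
  M.map fun row => (List.zipWith (fun wj x => List.replicate wj x) w row).flatten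

/-- Entrywise `≤` of `{0,1}`-matrices. -/
def matLE (M N : List (List Bool)) : Prop :=
  ∀ r c : ℕ, ent M r c = true → ent N r c = true

/-- A family of matrices `(M_{ij})` witnessing that `H` is a fractal function:
each `M_{ij}` is a Ferrers matrix of size `(C(n+i-1, n-1), C(m+j-1, m-1))` whose
entries sum to `H i j`, with `M_{ij} ≤ M_{i-1,j}^{⟨[n]^{i-1},•⟩}` when `i > 0` and
`M_{ij} ≤ M_{i,j-1}^{⟨•,[m]^{j-1}⟩}` when `j > 0`. -/
def FractalWitness (n m : ℕ) (H : ℕ → ℕ → ℕ) (Mat : ℕ → ℕ → List (List Bool)) : Prop :=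
  ∀ i j : ℕ,
    IsFerrers (Mat i j) ∧
    sizeIs (Mat i j) ((n + i - 1).choose (n - 1)) ((m + j - 1).choose (m - 1)) ∧
    matSum (Mat i j) = H i j ∧
    (∀ i' : ℕ, i = i' + 1 → matLE (Mat i j) (rowExp (Mat i' j) (expand^[i'] [n]))) ∧
    (∀ j' : ℕ, j = j' + 1 → matLE (Mat i j) (colExp (Mat i j') (expand^[j'] [m])))

/-- `H : ℕ² → ℕ` is a fractal function (Definition 4.7). -/
def IsFractalFunction (n m : ℕ) (H : ℕ → ℕ → ℕ) : Prop :=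
  H 0 0 = 1 ∧ ∃ Mat : ℕ → ℕ → List (List Bool), FractalWitness n m H Mat

/-!
Take every `M_{ij}` to be the all-ones matrix. Expanding an all-ones matrix along a sequence
`v` gives an all-ones matrix with `v.sum` rows (or columns), so the conditions hold once
`Σ [n]^d = |[n]^{d+1}|` and `|[n]^d| = C(n+d-1, n-1)`. The first holds because each entry `a`
of `[n]^d` expands to `a` entries. For the second, `[n+1] = [n] ⌢ (n+1)` gives Pascal's rule
`|[n+1]^{d+1}| = |[n]^{d+1}| + |[n+1]^d|`, which is the recursion of the multiset coefficient
`C(n+d-1, d)`. Uniqueness: a `{0,1}`-matrix of size `(a,b)` whose entries sum to `a·b` has no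
zero entry.
-/

lemma expand_append (σ τ : List ℕ) : expand (σ ++ τ) = expand σ ++ expand τ := by
  simp [expand]

lemma expand_singleton_succ (n : ℕ) : expand [n + 1] = expand [n] ++ [n + 1] := by
  simp [expand, List.range'_concat, Nat.add_comm]

lemma length_expand (σ : List ℕ) : (expand σ).length = σ.sum := by
  simp [expand, List.length_flatten, Function.comp_def]

lemma iterate_expand_nil (d : ℕ) : expand^[d] [] = [] :=
  Function.iterate_fixed rfl d

lemma iterate_expand_append (d : ℕ) (σ τ : List ℕ) :
    expand^[d] (σ ++ τ) = expand^[d] σ ++ expand^[d] τ := by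
  induction d generalizing σ τ with
  | zero => rfl
  | succ d ih => simp only [Function.iterate_succ_apply, expand_append, ih]

lemma length_iterate_expand_singleton (n d : ℕ) :
    (expand^[d] [n]).length = n.multichoose d := by
  induction d generalizing n with
  | zero => simp
  | succ d ihd =>
    induction n with
    | zero => simp [Function.iterate_succ_apply, expand, iterate_expand_nil]
    | succ n ihn =>
      rw [Function.iterate_succ_apply, expand_singleton_succ, iterate_expand_append,
        List.length_append, ← Function.iterate_succ_apply, ihn, ihd, Nat.multichoose_succ_succ]

lemma sum_iterate_expand_singleton (n d : ℕ) :
    (expand^[d] [n]).sum = n.multichoose (d + 1) := by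
  rw [← length_iterate_expand_singleton, Function.iterate_succ_apply', length_expand]

lemma multichoose_eq_choose_pred {n : ℕ} (hn : 0 < n) (d : ℕ) :
    n.multichoose d = (n + d - 1).choose (n - 1) := by
  rw [Nat.multichoose_eq]
  exact Nat.choose_symm_of_eq_add (by omega)

lemma length_iterate_expand_singleton_of_pos {n : ℕ} (hn : 0 < n) (d : ℕ) :
    (expand^[d] [n]).length = (n + d - 1).choose (n - 1) := by
  rw [length_iterate_expand_singleton, multichoose_eq_choose_pred hn]

lemma sum_iterate_expand_singleton_of_pos {n : ℕ} (hn : 0 < n) (d : ℕ) :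
    (expand^[d] [n]).sum = (n + (d + 1) - 1).choose (n - 1) := by
  rw [sum_iterate_expand_singleton, multichoose_eq_choose_pred hn]

def allOnes (a b : ℕ) : List (List Bool) := List.replicate a (List.replicate b true)

lemma ent_allOnes_eq_true_iff {a b r c : ℕ} :
    ent (allOnes a b) r c = true ↔ r < a ∧ c < b := by
  simp only [ent, allOnes, List.getD_eq_getElem?_getD, List.getElem?_replicate]
  by_cases hr : r < a <;> by_cases hc : c < b <;> simp [hr, hc]

lemma isFerrers_allOnes (a b : ℕ) : IsFerrers (allOnes a b) := by
  intro r c r' c' hr hc h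
  rw [ent_allOnes_eq_true_iff] at h ⊢
  omega

lemma sizeIs_allOnes (a b : ℕ) : sizeIs (allOnes a b) a b := by
  simp [sizeIs, allOnes]

lemma matSum_allOnes (a b : ℕ) : matSum (allOnes a b) = a * b := by
  simp [matSum, allOnes]

lemma flatten_zipWith_replicate_replicate {α : Type*} (v : List ℕ) (x : α) :
    (List.zipWith List.replicate v (List.replicate v.length x)).flatten
      = List.replicate v.sum x := by
  induction v with
  | nil => rfl
  | cons k v ih =>
    rw [List.length_cons, List.replicate_succ, List.zipWith_cons_cons, List.flatten_cons, ih,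
      List.sum_cons, List.replicate_add]

lemma rowExp_allOnes (v : List ℕ) (b : ℕ) : rowExp (allOnes v.length b) v = allOnes v.sum b :=
  flatten_zipWith_replicate_replicate v _

lemma colExp_allOnes (a : ℕ) (w : List ℕ) :
    colExp (allOnes a w.length) w = allOnes a w.sum := by
  rw [colExp, allOnes, List.map_replicate, flatten_zipWith_replicate_replicate, allOnes]

lemma eq_allOnes_of_matSum_eq {M : List (List Bool)} {a b : ℕ} (hsize : sizeIs M a b)
    (hsum : matSum M = a * b) : M = allOnes a b := by
  obtain ⟨hlen, hrows⟩ := hsize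
  have hcount_le : ∀ row ∈ M, row.count true ≤ b := fun row hrow =>
    List.count_le_length.trans (hrows row hrow).le
  have hfull : ∀ row ∈ M, row.count true = b := by
    by_contra! ⟨row, hrow, hne⟩
    have hlt : matSum M < (M.map fun _ => b).sum :=
      List.sum_lt_sum _ _ hcount_le ⟨row, hrow, (hcount_le row hrow).lt_of_ne hne⟩
    simp [hsum, hlen] at hlt
  rw [allOnes, List.eq_replicate_iff]
  refine ⟨hlen, fun row hrow => List.eq_replicate_iff.2 ⟨hrows row hrow, fun x hx => ?_⟩⟩
  exact (List.count_eq_length.1 ((hfull row hrow).trans (hrows row hrow).symm) x hx).symm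

lemma fractalWitness_allOnes {n m : ℕ} (hn : 0 < n) (hm : 0 < m) :
    FractalWitness n m (fun i j => (n + i - 1).choose (n - 1) * (m + j - 1).choose (m - 1))
      (fun i j => allOnes ((n + i - 1).choose (n - 1)) ((m + j - 1).choose (m - 1))) := by
  intro i j
  refine ⟨isFerrers_allOnes _ _, sizeIs_allOnes _ _, matSum_allOnes _ _, ?_, ?_⟩
  · rintro i' rfl
    beta_reduce
    rw [← sum_iterate_expand_singleton_of_pos hn, ← length_iterate_expand_singleton_of_pos hn,
      rowExp_allOnes]
    exact fun _ _ h => h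
  · rintro j' rfl
    beta_reduce
    rw [← sum_iterate_expand_singleton_of_pos hm, ← length_iterate_expand_singleton_of_pos hm,
      colExp_allOnes]
    exact fun _ _ h => h

/-- Remark 4.8: the numerical function `H(i,j) = C(i-1+n, n-1) · C(j-1+m, m-1)` is a
fractal function, and for each `(i,j)` the only Ferrers matrix of size
`(C(i-1+n, n-1), C(j-1+m, m-1))` satisfying the defining conditions is the matrix all
of whose entries are `1`: any family of matrices witnessing the conditions of the
definition consists of all-ones matrices. -/
theorem product_binomial_is_fractal_function (n m : ℕ) (hn : 0 < n) (hm : 0 < m) :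
    IsFractalFunction n m
      (fun i j => (n + i - 1).choose (n - 1) * (m + j - 1).choose (m - 1)) ∧
    ∀ Mat : ℕ → ℕ → List (List Bool),
      FractalWitness n m
        (fun i j => (n + i - 1).choose (n - 1) * (m + j - 1).choose (m - 1)) Mat →
      ∀ i j : ℕ, Mat i j =
        List.replicate ((n + i - 1).choose (n - 1))
          (List.replicate ((m + j - 1).choose (m - 1)) true) :=
  ⟨⟨by simp, _, fractalWitness_allOnes hn hm⟩, fun _ hW i j =>
    eq_allOnes_of_matSum_eq (hW i j).2.1 (hW i j).2.2.1⟩
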